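/- For any bipartite graph H on n vertices with e(H) edges and any integer q ≥ 1, the number of proper q-colorings satisfies ch(H,q) ≥ q^n · ((q-1)/q)^{e(H)}. -/

import Mathlib

/-!
Delete an edge `uv` from the bipartite graph `H`. The proper colorings of `H` are those of
`H - uv` with `c u ≠ c v`, and among the proper colorings of `H - uv` at most a `1/q` fraction
has `c u = c v`: for each colour `j`, swapping the colours `c u` and `j` on the Kempe chain of `u`
sends such a colouring to one with `c u = j` and `c v` unchanged. The chain cannot reach `v`,
since a two-coloured walk between equally coloured vertices has even length, whereas every
`u`–`v` walk of `H - uv` closes up with the edge `uv` to a closed walk of `H`, hence is odd.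
So each edge costs at most a factor `(q - 1)/q`, and induction on the number of edges finishes.
-/

open SimpleGraph

/-- Number of proper colorings of a graph with q colors. -/
noncomputable def chrom {V : Type*} (H : SimpleGraph V) (q : ℕ) : ℕ :=
  Nat.card {c : V → Fin q // ∀ a b, H.Adj a b → c a ≠ c b}

open Finset
open scoped Classical

lemma Equiv.swap_apply_mem_pair_iff {α : Type*} {a b z : α} :
    swap a b z ∈ ({a, b} : Set α) ↔ z ∈ ({a, b} : Set α) := by
  simp only [Set.mem_insert_iff, Set.mem_singleton_iff, swap_apply_eq_iff, swap_apply_left,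
    swap_apply_right]
  tauto

namespace SimpleGraph

variable {V α : Type*} {G : SimpleGraph V}

noncomputable def properColorings [Fintype V] (G : SimpleGraph V) (α : Type*) [Fintype α] :
    Finset (V → α) :=
  {c | ∀ x y, G.Adj x y → c x ≠ c y}

@[simp]
lemma mem_properColorings [Fintype V] [Fintype α] {c : V → α} :
    c ∈ G.properColorings α ↔ ∀ x y, G.Adj x y → c x ≠ c y := by
  simp [properColorings]

@[simp]
lemma properColorings_bot [Fintype V] [Fintype α] :
    (⊥ : SimpleGraph V).properColorings α = univ := by
  ext c
  simp

lemma filter_properColorings_deleteEdges_ne [Fintype V] [Fintype α] {u v : V}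
    (huv : G.Adj u v) :
    {c ∈ (G.deleteEdges {s(u, v)}).properColorings α | c u ≠ c v} = G.properColorings α := by
  ext c
  simp only [mem_filter, mem_properColorings, deleteEdges_adj, Set.mem_singleton_iff]
  constructor
  · rintro ⟨hc, hne⟩ x y hxy
    by_cases he : s(x, y) = s(u, v)
    · rcases Sym2.eq_iff.mp he with ⟨rfl, rfl⟩ | ⟨rfl, rfl⟩
      exacts [hne, hne.symm]
    · exact hc x y ⟨hxy, he⟩
  · exact fun hc => ⟨fun x y h => hc x y h.1, hc u v huv⟩

variable (G) in
def kempeGraph (c : V → α) (a b : α) : SimpleGraph V where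
  Adj x y := G.Adj x y ∧ c x ∈ ({a, b} : Set α) ∧ c y ∈ ({a, b} : Set α)
  symm := ⟨fun _ _ h => ⟨h.1.symm, h.2.2, h.2.1⟩⟩
  loopless := ⟨fun _ h => G.irrefl h.1⟩

variable (G) in
noncomputable def kempeSwap (c : V → α) (u : V) (a b : α) : V → α := fun x =>
  if (G.kempeGraph c a b).Reachable u x then Equiv.swap a b (c x) else c x

variable {c : V → α} {u v : V} {a b : α}

lemma kempeGraph_le : G.kempeGraph c a b ≤ G := fun _ _ h => h.1

lemma kempeSwap_mem_pair_iff {x : V} :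
    G.kempeSwap c u a b x ∈ ({a, b} : Set α) ↔ c x ∈ ({a, b} : Set α) := by
  unfold kempeSwap
  split_ifs
  exacts [Equiv.swap_apply_mem_pair_iff, Iff.rfl]

lemma kempeGraph_kempeSwap : G.kempeGraph (G.kempeSwap c u a b) a b = G.kempeGraph c a b := by
  ext x y
  simp only [kempeGraph, kempeSwap_mem_pair_iff]

lemma kempeSwap_kempeSwap : G.kempeSwap (G.kempeSwap c u a b) u a b = c := by
  funext x
  simp only [kempeSwap, kempeGraph_kempeSwap]
  split_ifs <;> simp

lemma kempeSwap_self : G.kempeSwap c u a b u = Equiv.swap a b (c u) :=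
  if_pos (Reachable.refl u)

lemma kempeSwap_of_not_reachable (h : ¬(G.kempeGraph c a b).Reachable u v) :
    G.kempeSwap c u a b v = c v :=
  if_neg h

lemma swap_ne_of_reachable_of_not_reachable {x y : V} (hc : ∀ x y, G.Adj x y → c x ≠ c y)
    (hxy : G.Adj x y) (hx : (G.kempeGraph c a b).Reachable u x)
    (hy : ¬(G.kempeGraph c a b).Reachable u y) : Equiv.swap a b (c x) ≠ c y := by
  intro h
  rw [Equiv.swap_apply_eq_iff] at h
  by_cases hcy : c y ∈ ({a, b} : Set α)
  · have hcx : c x ∈ ({a, b} : Set α) := h ▸ Equiv.swap_apply_mem_pair_iff.mpr hcy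
    exact hy (hx.trans (Adj.reachable ⟨hxy, hcx, hcy⟩))
  · simp only [Set.mem_insert_iff, Set.mem_singleton_iff, not_or] at hcy
    exact hc x y hxy (h.trans (Equiv.swap_apply_of_ne_of_ne hcy.1 hcy.2))

lemma kempeSwap_mem_properColorings [Fintype V] [Fintype α]
    (hc : c ∈ G.properColorings α) : G.kempeSwap c u a b ∈ G.properColorings α := by
  rw [mem_properColorings] at hc ⊢
  intro x y hxy
  unfold kempeSwap
  split_ifs with hx hy hy
  · exact (Equiv.swap a b).injective.ne (hc x y hxy)
  · exact swap_ne_of_reachable_of_not_reachable hc hxy hx hy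
  · exact (swap_ne_of_reachable_of_not_reachable hc hxy.symm hy hx).symm
  · exact hc x y hxy

lemma not_reachable_kempeGraph [Fintype V] [Fintype α] (hc : c ∈ G.properColorings α)
    (huv : ∀ p : G.Walk u v, Odd p.length) (hu : c u = a) (hv : c v = a) :
    ¬(G.kempeGraph c a b).Reachable u v := by
  rintro ⟨p⟩
  rw [mem_properColorings] at hc
  let χ : (G.kempeGraph c a b).Coloring Bool := Coloring.mk (fun x => decide (c x = a)) <| by
    rintro x y ⟨hxy, hx | hx, hy | hy⟩ <;> have := hc x y hxy <;> simp_all [eq_comm]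
  have heven : Even p.length := (χ.even_length_iff_congr p).mpr (by simp [χ, Coloring.mk, hu, hv])
  have hodd := huv (p.mapLe kempeGraph_le)
  rw [Walk.length_mapLe] at hodd
  exact Nat.not_even_iff_odd.mpr hodd heven

theorem card_mul_card_filter_eq_le_card_properColorings [Fintype V] [Fintype α]
    (huv : ∀ p : G.Walk u v, Odd p.length) :
    Fintype.card α * #{c ∈ G.properColorings α | c u = c v} ≤ #(G.properColorings α) := by
  rw [← card_univ, ← card_product]
  refine card_le_card_of_injOn (fun jc => G.kempeSwap jc.2 u (jc.2 u) jc.1) ?_ ?_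
  · rintro ⟨j, c⟩ h
    exact kempeSwap_mem_properColorings (mem_filter.mp (mem_product.mp h).2).1
  · have hends : ∀ j c, c ∈ {c ∈ G.properColorings α | c u = c v} →
        G.kempeSwap c u (c u) j u = j ∧ G.kempeSwap c u (c u) j v = c u := by
      intro j c hc
      rw [mem_filter] at hc
      refine ⟨by rw [kempeSwap_self, Equiv.swap_apply_left], ?_⟩
      rw [kempeSwap_of_not_reachable (not_reachable_kempeGraph hc.1 huv rfl hc.2.symm), hc.2]
    rintro ⟨j₁, c₁⟩ h₁ ⟨j₂, c₂⟩ h₂ heq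
    simp only [coe_product, coe_univ, Set.mem_prod, Set.mem_univ, mem_coe, true_and] at h₁ h₂ heq
    obtain ⟨hu₁, hv₁⟩ := hends j₁ c₁ h₁
    obtain ⟨hu₂, hv₂⟩ := hends j₂ c₂ h₂
    have hj : j₁ = j₂ := by rw [← hu₁, ← hu₂, heq]
    have hcu : c₁ u = c₂ u := by rw [← hv₁, ← hv₂, heq]
    refine Prod.ext hj ?_
    calc c₁ = G.kempeSwap (G.kempeSwap c₁ u (c₁ u) j₁) u (c₁ u) j₁ := kempeSwap_kempeSwap.symm
      _ = G.kempeSwap (G.kempeSwap c₂ u (c₂ u) j₂) u (c₂ u) j₂ := by rw [heq, hcu, hj]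
      _ = c₂ := kempeSwap_kempeSwap

theorem card_properColorings_deleteEdges_mul_le [Fintype V] [Fintype α]
    (hG : G.Colorable 2) (huv : G.Adj u v) :
    #((G.deleteEdges {s(u, v)}).properColorings α) * (Fintype.card α - 1) ≤
      Fintype.card α * #(G.properColorings α) := by
  set G' := G.deleteEdges {s(u, v)}
  set q := Fintype.card α
  have hodd : ∀ p : G'.Walk u v, Odd p.length := by
    intro p
    have := two_colorable_iff_forall_loop_even.mp hG u
      ((p.mapLe (deleteEdges_le _)).concat huv.symm)
    rw [Walk.length_concat, Walk.length_mapLe, Nat.even_add_one] at this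
    exact Nat.not_even_iff_odd.mp this
  have hsplit : #{c ∈ G'.properColorings α | c u = c v} + #(G.properColorings α) =
      #(G'.properColorings α) := by
    rw [← filter_properColorings_deleteEdges_ne huv]
    exact card_filter_add_card_filter_not _
  have hkempe := card_mul_card_filter_eq_le_card_properColorings (α := α) hodd
  calc #(G'.properColorings α) * (q - 1)
      = q * #(G'.properColorings α) - #(G'.properColorings α) := by
        rw [Nat.mul_sub_one, mul_comm]
    _ ≤ q * #(G'.properColorings α) - q * #{c ∈ G'.properColorings α | c u = c v} :=
        Nat.sub_le_sub_left hkempe _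
    _ = q * #(G.properColorings α) := by
        rw [← Nat.mul_sub, ← hsplit, Nat.add_sub_cancel_left]

theorem card_pow_mul_pred_pow_le_pow_mul_card_properColorings [Fintype V] [Fintype α]
    (hG : G.Colorable 2) :
    Fintype.card α ^ Fintype.card V * (Fintype.card α - 1) ^ Nat.card G.edgeSet ≤
      Fintype.card α ^ Nat.card G.edgeSet * #(G.properColorings α) := by
  set q := Fintype.card α
  obtain ⟨m, hm⟩ : ∃ m, Nat.card G.edgeSet = m := ⟨_, rfl⟩
  induction m generalizing G with
  | zero =>
    have hbot : G = ⊥ := by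
      rwa [← edgeSet_eq_empty, ← Set.ncard_eq_zero, ← Nat.card_coe_set_eq]
    subst hbot
    simp [q]
  | succ m ih =>
    obtain ⟨u, v, huv⟩ : ∃ u v, G.Adj u v := by
      rw [← ne_bot_iff_exists_adj, ← edgeSet_nonempty, ← Set.ncard_pos, ← Nat.card_coe_set_eq,
        hm]
      exact m.succ_pos
    have hm' : Nat.card (G.deleteEdges {s(u, v)}).edgeSet = m := by
      rw [Nat.card_coe_set_eq, edgeSet_deleteEdges,
        Set.ncard_sdiff_singleton_of_mem (G.mem_edgeSet.mpr huv), ← Nat.card_coe_set_eq, hm,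
        Nat.add_sub_cancel]
    have hdel := ih (hG.mono_left (deleteEdges_le _)) hm'
    rw [hm'] at hdel
    have hstep := card_properColorings_deleteEdges_mul_le (α := α) hG huv
    rw [hm]
    calc q ^ Fintype.card V * (q - 1) ^ (m + 1)
        = q ^ Fintype.card V * (q - 1) ^ m * (q - 1) := by ring
      _ ≤ q ^ m * #((G.deleteEdges {s(u, v)}).properColorings α) * (q - 1) :=
        Nat.mul_le_mul_right _ hdel
      _ = q ^ m * (#((G.deleteEdges {s(u, v)}).properColorings α) * (q - 1)) := by ring
      _ ≤ q ^ m * (q * #(G.properColorings α)) := Nat.mul_le_mul_left _ hstep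
      _ = q ^ (m + 1) * #(G.properColorings α) := by ring

end SimpleGraph

lemma chrom_eq_card_properColorings {V : Type*} [Fintype V] (H : SimpleGraph V) (q : ℕ) :
    chrom H q = #(H.properColorings (Fin q)) := by
  rw [chrom, Nat.card_eq_fintype_card, Fintype.card_subtype, properColorings]
  congr

theorem stmt_12 {V : Type*} [Fintype V] (H : SimpleGraph V) (hbip : H.Colorable 2)
    (q : ℕ) (hq : 1 ≤ q) :
    (chrom H q : ℝ) ≥
      (q : ℝ) ^ (Fintype.card V) * (((q : ℝ) - 1) / q) ^ (Nat.card H.edgeSet) := by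
  have hcount := card_pow_mul_pred_pow_le_pow_mul_card_properColorings (α := Fin q) hbip
  rw [Fintype.card_fin] at hcount
  have hpos : (0 : ℝ) < (q : ℝ) ^ Nat.card H.edgeSet := pow_pos (by exact_mod_cast hq) _
  rw [chrom_eq_card_properColorings, ge_iff_le, div_pow, ← mul_div_assoc, div_le_iff₀ hpos,
    mul_comm (#_ : ℝ), ← Nat.cast_one, ← Nat.cast_sub hq]
  exact_mod_cast hcount
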